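/- arXiv:1309.2162 — 2 statements merged into one kernel-verified Lean document; each statement's English description precedes it below -/
import Mathlib

section
/- Let ρ_0 ∈ C¹(Ω) with 0 < ρ̲ ≤ ρ_0 ≤ ρ̄, let ρ, Ψ be the associated density and acoustic potential, take endpoint values v_0 = v_T = 0, and let χ ∈ C¹[0,T] satisfy χ(t) > (N/2)(∂_tΨ(t,x) + p(ρ(t,x)) + λ_max[(∇Ψ(t,x)⊗∇Ψ(t,x))/ρ(t,x)]) for all (t,x) ∈ [0,T] × Ω, with e the associated kinetic-energy function. Then v ≡ 0 together with the tensor field U ≡ 0 belongs to the set of subsolutions X_{0,e}[0,T]; in particular X_{0,e}[0,T] is non-empty. -/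
open MeasureTheory Set Filter Topology Function

noncomputable section

namespace CompressibleEuler

/-- Model of `ℝ^N`. -/
abbrev Vec (N : ℕ) := Fin N → ℝ

/-- Fundamental domain `[-1,1)^N` of the flat torus `Ω = ([-1,1]|_{-1;1})^N`. -/
def Q (N : ℕ) : Set (Vec N) := Set.univ.pi fun _ => Set.Ico (-1 : ℝ) 1

/-- A function on `ℝ^N` represents a function on the torus iff it is `2`-periodic
in each coordinate direction. -/
def Periodic2 {N : ℕ} {α : Type*} (f : Vec N → α) : Prop :=
  ∀ (x : Vec N) (i : Fin N), f (x + (2 : ℝ) • (Pi.single i (1 : ℝ) : Vec N)) = f x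

/-- Spatial partial derivative in the `i`-th direction. -/
def pdx {N : ℕ} (i : Fin N) (f : Vec N → ℝ) (x : Vec N) : ℝ :=
  fderiv ℝ f x (Pi.single i 1)

/-- Spatial gradient. -/
def grad {N : ℕ} (f : Vec N → ℝ) (x : Vec N) : Vec N := fun i => pdx i f x

/-- Laplacian. -/
def lap {N : ℕ} (f : Vec N → ℝ) (x : Vec N) : ℝ := ∑ i, pdx i (pdx i f) x

/-- Time derivative `∂_t` of a space-time function. -/
def pdt {N : ℕ} {α : Type*} [NormedAddCommGroup α] [NormedSpace ℝ α]
    (f : ℝ → Vec N → α) (t : ℝ) (x : Vec N) : α :=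
  fderiv ℝ (uncurry f) (t, x) ((1 : ℝ), (0 : Vec N))

/-- Spatial partial derivative `∂_{x_i}` of a space-time function. -/
def pdxt {N : ℕ} {α : Type*} [NormedAddCommGroup α] [NormedSpace ℝ α]
    (i : Fin N) (f : ℝ → Vec N → α) (t : ℝ) (x : Vec N) : α :=
  fderiv ℝ (uncurry f) (t, x) ((0 : ℝ), Pi.single i 1)

/-- Smooth scalar test functions on `[0,T] × Ω` (smooth and space-periodic). -/
def IsTestScalar {N : ℕ} (φ : ℝ → Vec N → ℝ) : Prop :=
  ContDiff ℝ (⊤ : ℕ∞) (uncurry φ) ∧ ∀ t, Periodic2 (φ t)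

/-- Smooth vector test functions on `[0,T] × Ω`. -/
def IsTestVec {N : ℕ} (φ : ℝ → Vec N → Vec N) : Prop :=
  ContDiff ℝ (⊤ : ℕ∞) (uncurry φ) ∧ ∀ t, Periodic2 (φ t)

/-- Smooth test functions on the torus `Ω`. -/
def IsTestSpace {N : ℕ} (φ : Vec N → ℝ) : Prop :=
  ContDiff ℝ (⊤ : ℕ∞) φ ∧ Periodic2 φ

/-- Bounded measurable data on `[0,T]`. -/
def BddMeas {N : ℕ} (T : ℝ) (ρ : ℝ → Vec N → ℝ) (u : ℝ → Vec N → Vec N) : Prop :=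
  Measurable (uncurry ρ) ∧ Measurable (uncurry u) ∧
  ∃ C : ℝ, ∀ t ∈ Icc (0 : ℝ) T, ∀ x, |ρ t x| ≤ C ∧ ∀ i, |u t x i| ≤ C

/-- `[ρ, u]` is a weak solution of the compressible Euler system on `[0,T] × Ω`
with initial data `(ρ₀, u₀)`. -/
def IsWeakSolution {N : ℕ} (p : ℝ → ℝ) (ρ₀ : Vec N → ℝ) (u₀ : Vec N → Vec N)
    (T : ℝ) (ρ : ℝ → Vec N → ℝ) (u : ℝ → Vec N → Vec N) : Prop :=
  BddMeas T ρ u ∧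
  (∀ t ∈ Icc (0 : ℝ) T, Periodic2 (ρ t) ∧ Periodic2 (u t)) ∧
  -- weak formulation of the continuity equation
  (∀ τ ∈ Icc (0 : ℝ) T, ∀ φ : ℝ → Vec N → ℝ, IsTestScalar φ →
    ∫ x in Q N, (ρ τ x * φ τ x - ρ₀ x * φ 0 x) =
      ∫ t in (0 : ℝ)..τ, ∫ x in Q N,
        (ρ t x * pdt φ t x + ∑ i, ρ t x * u t x i * pdxt i φ t x)) ∧
  -- weak formulation of the momentum equation
  (∀ τ ∈ Icc (0 : ℝ) T, ∀ φ : ℝ → Vec N → Vec N, IsTestVec φ →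
    ∫ x in Q N, ∑ j, (ρ τ x * u τ x j * φ τ x j - ρ₀ x * u₀ x j * φ 0 x j) =
      ∫ t in (0 : ℝ)..τ, ∫ x in Q N,
        ((∑ j, ρ t x * u t x j * pdt (fun s y => φ s y j) t x)
          + (∑ i, ∑ j, ρ t x * u t x i * u t x j * pdxt i (fun s y => φ s y j) t x)
          + p (ρ t x) * ∑ i, pdxt i (fun s y => φ s y i) t x))

/-- The pressure potential `P(r) = r ∫_1^r p(z)/z² dz`. -/
def Ppot (p : ℝ → ℝ) (r : ℝ) : ℝ := r * ∫ z in (1 : ℝ)..r, p z / z ^ 2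

/-- The mechanical energy density `½ ρ|u|² + P(ρ)`. -/
def edens {N : ℕ} (p : ℝ → ℝ) (ρ : ℝ → Vec N → ℝ) (u : ℝ → Vec N → Vec N)
    (t : ℝ) (x : Vec N) : ℝ :=
  (1 / 2) * ρ t x * (∑ i, (u t x i) ^ 2) + Ppot p (ρ t x)

/-- `[ρ, u]` is an admissible weak solution: a weak solution satisfying the weak
energy inequality with nonnegative test functions compactly supported in `[0,T) × Ω`. -/
def IsAdmissible {N : ℕ} (p : ℝ → ℝ) (ρ₀ : Vec N → ℝ) (u₀ : Vec N → Vec N)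
    (T : ℝ) (ρ : ℝ → Vec N → ℝ) (u : ℝ → Vec N → Vec N) : Prop :=
  IsWeakSolution p ρ₀ u₀ T ρ u ∧
  ∀ φ : ℝ → Vec N → ℝ, IsTestScalar φ → (∀ t x, 0 ≤ φ t x) →
    (∃ T' < T, ∀ t, T' ≤ t → ∀ x, φ t x = 0) →
    0 ≤ (∫ t in (0 : ℝ)..T, ∫ x in Q N,
            (edens p ρ u t x * pdt φ t x
              + ∑ i, (edens p ρ u t x + p (ρ t x)) * u t x i * pdxt i φ t x))
        + ∫ x in Q N, ((1 / 2) * ρ₀ x * (∑ i, (u₀ x i) ^ 2) + Ppot p (ρ₀ x)) * φ 0 x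

/-- The structural hypotheses on the pressure:
`p ∈ C[0,∞) ∩ C¹(0,∞)`, `p(0) = 0`, `p' > 0` on `(0,∞)`. -/
def PressureLaw (p : ℝ → ℝ) : Prop :=
  ContinuousOn p (Ici 0) ∧ p 0 = 0 ∧
  ∃ p' : ℝ → ℝ, ContinuousOn p' (Ioi 0) ∧
    ∀ r : ℝ, 0 < r → HasDerivAt p (p' r) r ∧ 0 < p' r

/-- `L` is the essential limit of `F` at `τ` from the right. -/
def EssRightLim (F : ℝ → ℝ) (τ L : ℝ) : Prop :=
  ∀ ε > 0, ∃ δ > 0, ∀ᵐ t ∂(volume.restrict (Ioo τ (τ + δ))), |F t - L| < ε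

/-- `L` is the essential limit of `F` at `τ` from the left. -/
def EssLeftLim (F : ℝ → ℝ) (τ L : ℝ) : Prop :=
  ∀ ε > 0, ∃ δ > 0, ∀ᵐ t ∂(volume.restrict (Ioo (τ - δ) τ)), |F t - L| < ε

/-- `E = E(τ+)`: the right essential trace of the mechanical energy at time `τ`. -/
def IsRightTrace {N : ℕ} (p : ℝ → ℝ) (ρ : ℝ → Vec N → ℝ) (u : ℝ → Vec N → Vec N)
    (τ : ℝ) (E : Vec N → ℝ) : Prop :=
  Measurable E ∧ (∃ C : ℝ, ∀ x, |E x| ≤ C) ∧ Periodic2 E ∧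
  ∀ φ : Vec N → ℝ, IsTestSpace φ →
    EssRightLim (fun t => ∫ x in Q N, edens p ρ u t x * φ x) τ (∫ x in Q N, E x * φ x)

/-- `E = E(τ−)`: the left essential trace of the mechanical energy at time `τ`. -/
def IsLeftTrace {N : ℕ} (p : ℝ → ℝ) (ρ : ℝ → Vec N → ℝ) (u : ℝ → Vec N → Vec N)
    (τ : ℝ) (E : Vec N → ℝ) : Prop :=
  Measurable E ∧ (∃ C : ℝ, ∀ x, |E x| ≤ C) ∧ Periodic2 E ∧
  ∀ φ : Vec N → ℝ, IsTestSpace φ →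
    EssLeftLim (fun t => ∫ x in Q N, edens p ρ u t x * φ x) τ (∫ x in Q N, E x * φ x)

/-- Dafermos' principle of maximal dissipation for an admissible weak solution
`[ρ, u]` of the Euler system on `[0,T]`. -/
def MaxDissipation {N : ℕ} (p : ℝ → ℝ) (ρ₀ : Vec N → ℝ) (u₀ : Vec N → Vec N)
    (T : ℝ) (ρ : ℝ → Vec N → ℝ) (u : ℝ → Vec N → Vec N) : Prop :=
  ∀ τ ∈ Ico (0 : ℝ) T, ∀ T' ∈ Ioc τ T, ∀ ρ' u',
    IsAdmissible p ρ₀ u₀ T' ρ' u' →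
    (∀ t ∈ Icc (0 : ℝ) τ, ∀ x, ρ t x = ρ' t x ∧ ∀ i, ρ t x * u t x i = ρ' t x * u' t x i) →
    ∃ τs : ℕ → ℝ, (∀ n, τ < τs n ∧ τs n < T') ∧ Tendsto τs atTop (𝓝 τ) ∧
      ∀ n, ∀ E E' : Vec N → ℝ, IsRightTrace p ρ u (τs n) E →
        IsRightTrace p ρ' u' (τs n) E' →
        ∫ x in Q N, E x ≤ ∫ x in Q N, E' x

/-! ### The convex-integration setup: density ansatz, acoustic potential, subsolutions -/

/-- Mean value of `ρ₀` over the torus (`|Ω| = 2^N`). -/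
def meanQ {N : ℕ} (ρ₀ : Vec N → ℝ) : ℝ := (∫ x in Q N, ρ₀ x) / 2 ^ N

/-- A smooth cut-off `h` with `0 ≤ h ≤ 1`, `h ≡ 1` on `[0,T/4]`, `h ≡ 0` on `[3T/4,T]`. -/
def IsCutoff (T : ℝ) (h : ℝ → ℝ) : Prop :=
  ContDiff ℝ (⊤ : ℕ∞) h ∧ (∀ t, 0 ≤ h t ∧ h t ≤ 1) ∧
  (∀ t ≤ T / 4, h t = 1) ∧ (∀ t, 3 * T / 4 ≤ t → h t = 0)

/-- The density ansatz `ρ(t,x) = h(t) ρ₀(x) + (1 − h(t)) ρ̃`. -/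
def rhoOf {N : ℕ} (ρ₀ : Vec N → ℝ) (h : ℝ → ℝ) (t : ℝ) (x : Vec N) : ℝ :=
  h t * ρ₀ x + (1 - h t) * meanQ ρ₀

/-- `Ψ` is the acoustic potential: the unique zero-mean solution of
`−ΔΨ(t,·) = ∂_t ρ(t,·) = h'(t)(ρ₀ − ρ̃)` on the torus. -/
def IsAcousticPotential {N : ℕ} (ρ₀ : Vec N → ℝ) (h : ℝ → ℝ) (Ψ : ℝ → Vec N → ℝ) : Prop :=
  ContDiff ℝ (⊤ : ℕ∞) (uncurry Ψ) ∧ (∀ t, Periodic2 (Ψ t)) ∧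
  (∀ t, ∫ x in Q N, Ψ t x = 0) ∧
  ∀ t x, -lap (Ψ t) x = deriv h t * (ρ₀ x - meanQ ρ₀)

/-- The kinetic-energy function `e(t,x) = χ(t) − (N/2) ∂_tΨ(t,x) − (N/2) p(ρ(t,x))`. -/
def eFun {N : ℕ} (p : ℝ → ℝ) (ρ₀ : Vec N → ℝ) (h : ℝ → ℝ) (χ : ℝ → ℝ)
    (Ψ : ℝ → Vec N → ℝ) (t : ℝ) (x : Vec N) : ℝ :=
  χ t - ((N : ℝ) / 2) * pdt Ψ t x - ((N : ℝ) / 2) * p (rhoOf ρ₀ h t x)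

/-- The maximal eigenvalue of an `N × N` matrix (given as `Fin N → Fin N → ℝ`). -/
def lambdaMax {N : ℕ} (A : Fin N → Fin N → ℝ) : ℝ :=
  sSup {t : ℝ | ∃ v : Vec N, v ≠ 0 ∧ ∀ i, (∑ j, A i j * v j) = t * v i}

/-- Membership in the set of subsolutions `X_{0,e}[a,b]`, with explicitly given
associated tensor field `U`: `v ∈ C_weak([a,b]; L²(Ω;ℝ^N))`, `v(a) = v₀`, `v(b) = v_T`,
`div v = 0`, `v ∈ C¹((a,b) × Ω)`, `∂_t v + div U = 0` with `U` symmetric traceless, and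
`(N/2) λ_max[((v + ∇Ψ) ⊗ (v + ∇Ψ))/ρ − U] < e` in `(a,b) × Ω`. -/
def InXsubU {N : ℕ} (ρ Ψ e : ℝ → Vec N → ℝ) (v₀ vT : Vec N → Vec N) (a b : ℝ)
    (v : ℝ → Vec N → Vec N) (U : ℝ → Vec N → Fin N → Fin N → ℝ) : Prop :=
  (∀ x, v a x = v₀ x) ∧ (∀ x, v b x = vT x) ∧
  -- v ∈ C_weak([a,b]; L²(Ω;ℝ^N))
  Measurable (uncurry v) ∧
  (∃ C : ℝ, ∀ t ∈ Icc a b, ∫ x in Q N, (∑ i, (v t x i) ^ 2) ≤ C) ∧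
  (∀ t ∈ Icc a b, Periodic2 (v t)) ∧
  (∀ φ : ℝ → Vec N → Vec N, IsTestVec φ →
    ContinuousOn (fun t => ∫ x in Q N, ∑ i, v t x i * φ t x i) (Icc a b)) ∧
  -- interior regularity
  ContDiffOn ℝ 1 (uncurry v) (Ioo a b ×ˢ (univ : Set (Vec N))) ∧
  ContDiffOn ℝ 1 (uncurry U) (Ioo a b ×ˢ (univ : Set (Vec N))) ∧
  (∀ t ∈ Ioo a b, Periodic2 (U t)) ∧
  -- div v = 0
  (∀ t ∈ Ioo a b, ∀ x, (∑ i, pdxt i (fun s y => v s y i) t x) = 0) ∧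
  -- U symmetric and traceless
  (∀ t ∈ Ioo a b, ∀ x, (∀ i j, U t x i j = U t x j i) ∧ (∑ i, U t x i i) = 0) ∧
  -- ∂_t v + div U = 0
  (∀ t ∈ Ioo a b, ∀ x, ∀ j,
    pdt (fun s y => v s y j) t x + ∑ i, pdxt i (fun s y => U s y i j) t x = 0) ∧
  -- pointwise subsolution inequality
  (∀ t ∈ Ioo a b, ∀ x,
    ((N : ℝ) / 2) * lambdaMax (fun i j =>
        (v t x i + grad (Ψ t) x i) * (v t x j + grad (Ψ t) x j) / ρ t x - U t x i j)
      < e t x)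

/-- Membership in the set of subsolutions `X_{0,e}[a,b]`. -/
def InXsub {N : ℕ} (ρ Ψ e : ℝ → Vec N → ℝ) (v₀ vT : Vec N → Vec N) (a b : ℝ)
    (v : ℝ → Vec N → Vec N) : Prop :=
  ∃ U, InXsubU ρ Ψ e v₀ vT a b v U


/-- If `χ(t) > (N/2)(∂_tΨ(t,x) + p(ρ(t,x)) + λ_max[(∇Ψ ⊗ ∇Ψ)/ρ(t,x)])` on `[0,T] × Ω`,
then `v ≡ 0` with tensor field `U ≡ 0` belongs to the set of subsolutions
`X_{0,e}[0,T]` (endpoint values `v₀ = v_T = 0`); in particular `X_{0,e}[0,T] ≠ ∅`. -/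
theorem statement_14 {N : ℕ} (hN : N = 2 ∨ N = 3) (p : ℝ → ℝ) (hp : PressureLaw p)
    (T : ℝ) (hT : 0 < T)
    (ρ₀ : Vec N → ℝ) (hρ₀ : ContDiff ℝ 1 ρ₀) (hρ₀per : Periodic2 ρ₀)
    (rlo rhi : ℝ) (hrlo : 0 < rlo) (hbounds : ∀ x, rlo ≤ ρ₀ x ∧ ρ₀ x ≤ rhi)
    (h : ℝ → ℝ) (hh : IsCutoff T h)
    (Ψ : ℝ → Vec N → ℝ) (hΨ : IsAcousticPotential ρ₀ h Ψ)
    (χ : ℝ → ℝ) (hχreg : ContDiff ℝ 1 χ)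
    (hχ : ∀ t ∈ Icc (0 : ℝ) T, ∀ x,
      ((N : ℝ) / 2) * (pdt Ψ t x + p (rhoOf ρ₀ h t x)
          + lambdaMax (fun i j => grad (Ψ t) x i * grad (Ψ t) x j / rhoOf ρ₀ h t x))
        < χ t) :
    InXsubU (rhoOf ρ₀ h) Ψ (eFun p ρ₀ h χ Ψ)
        (fun _ => (0 : Vec N)) (fun _ => (0 : Vec N)) 0 T
        (fun _ _ => (0 : Vec N)) (fun _ _ _ _ => (0 : ℝ)) ∧
    ∃ v : ℝ → Vec N → Vec N,
      InXsub (rhoOf ρ₀ h) Ψ (eFun p ρ₀ h χ Ψ)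
        (fun _ => (0 : Vec N)) (fun _ => (0 : Vec N)) 0 T v := by
  have hzero : ∀ (f : ℝ → Vec N → ℝ), (∀ s y, f s y = 0) →
      ∀ t x, fderiv ℝ (uncurry f) (t, x) = 0 := by
    intro f hf t x
    have : uncurry f = fun _ => (0 : ℝ) := by
      funext q; exact hf q.1 q.2
    rw [this, fderiv_fun_const]; rfl
  have hpdt0 : ∀ (t : ℝ) (x : Vec N), pdt (fun _ _ => (0 : ℝ)) t x = 0 := by
    intro t x
    show fderiv ℝ (uncurry fun (_ : ℝ) (_ : Vec N) => (0 : ℝ)) (t, x) ((1 : ℝ), (0 : Vec N)) = 0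
    rw [hzero _ (fun _ _ => rfl)]; rfl
  have hpdxt0 : ∀ (i : Fin N) (t : ℝ) (x : Vec N), pdxt i (fun _ _ => (0 : ℝ)) t x = 0 := by
    intro i t x
    show fderiv ℝ (uncurry fun (_ : ℝ) (_ : Vec N) => (0 : ℝ)) (t, x) ((0 : ℝ), Pi.single i 1) = 0
    rw [hzero _ (fun _ _ => rfl)]; rfl
  have hmain : InXsubU (rhoOf ρ₀ h) Ψ (eFun p ρ₀ h χ Ψ)
      (fun _ => (0 : Vec N)) (fun _ => (0 : Vec N)) 0 T
      (fun _ _ => (0 : Vec N)) (fun _ _ _ _ => (0 : ℝ)) := by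
    refine ⟨fun _ => rfl, fun _ => rfl, ?_, ⟨0, fun t _ => ?_⟩, ?_, ?_, ?_, ?_, ?_, ?_, ?_, ?_, ?_⟩
    · exact measurable_const
    · simp
    · intro t _ x i; rfl
    · intro φ _
      have : (fun t => ∫ x in Q N, ∑ i, (0 : Vec N) i * φ t x i) =
          fun _ => (0 : ℝ) := by
        funext t; simp
      rw [this]; exact continuousOn_const
    · exact contDiffOn_const
    · exact contDiffOn_const
    · intro t _ x i; rfl
    · intro t _ x
      exact Finset.sum_eq_zero fun i _ => hpdxt0 i t x
    · intro t _ x; exact ⟨fun _ _ => rfl, by simp⟩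
    · intro t _ x j
      have h1 : pdt (fun s y => (fun _ _ => (0 : Vec N)) s y j) t x = 0 := hpdt0 t x
      rw [h1, Finset.sum_eq_zero fun i _ => hpdxt0 i t x, add_zero]
    · intro t ht x
      have htI : t ∈ Icc (0 : ℝ) T := ⟨le_of_lt ht.1, le_of_lt ht.2⟩
      have hχ' := hχ t htI x
      have hmat : (fun i j =>
          ((fun _ _ => (0 : Vec N)) t x i + grad (Ψ t) x i) *
            ((fun _ _ => (0 : Vec N)) t x j + grad (Ψ t) x j) / rhoOf ρ₀ h t x -
            (fun _ _ _ _ => (0 : ℝ)) t x i j) =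
          (fun i j => grad (Ψ t) x i * grad (Ψ t) x j / rhoOf ρ₀ h t x) := by
        funext i j; simp
      rw [hmat]
      unfold eFun
      set A := pdt Ψ t x
      set B := p (rhoOf ρ₀ h t x)
      set L := lambdaMax (fun i j => grad (Ψ t) x i * grad (Ψ t) x j / rhoOf ρ₀ h t x)
      have hexp : ((N : ℝ) / 2) * (A + B + L) =
          ((N : ℝ) / 2) * A + ((N : ℝ) / 2) * B + ((N : ℝ) / 2) * L := by ring
      rw [hexp] at hχ'
      linarith
  exact ⟨hmain, ⟨fun _ _ => (0 : Vec N), ⟨_, hmain⟩⟩⟩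

end CompressibleEuler
end
end

section
/- Let (Ω,μ) be a finite measure space, let ρ be a measurable function with 0 < c ≤ ρ ≤ C almost everywhere for constants c, C, and let {w_k}_{k≥0} ⊂ L²(Ω;ℝ^N) be a sequence such that (i) |∫_Ω (1/ρ)(w_k − w_{k−1})·w_m dμ| < 2^{−k} for every k ≥ 1 and every 0 ≤ m ≤ k−1, and (ii) the sequence of numbers ∫_Ω (1/ρ)|w_k|² dμ converges as k → ∞. Then {w_k} is a Cauchy sequence in L²(Ω;ℝ^N) and hence converges strongly in L²(Ω;ℝ^N). -/
open MeasureTheory Filter Topology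

open scoped ENNReal

/-!
The pairing `B(u, v) = ∫ ρ⁻¹ u · v dμ` is a symmetric bilinear form on `L²(Ω; ℝᴺ)` with
`‖u‖² ≤ C · B(u, u)`. For `m ≤ n`,
`B(wₙ - wₘ, wₙ - wₘ) = B(wₙ, wₙ) - B(wₘ, wₘ) - 2 B(wₙ - wₘ, wₘ)`;
telescoping the cross-term hypothesis bounds `|B(wₙ - wₘ, wₘ)|` by `2⁻ᵐ`, and the first two
terms cancel in the limit because `B(wₖ, wₖ)` converges. So `(wₖ)` is Cauchy for `B`, hence in
`L²`, and it converges because `L²` is complete.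
-/

lemma abs_sub_le_geometric_of_abs_succ_sub_le {a : ℕ → ℝ} {m : ℕ}
    (ha : ∀ k ≥ m, |a (k + 1) - a k| ≤ 2⁻¹ ^ (k + 1)) {n : ℕ} (hmn : m ≤ n) :
    |a n - a m| ≤ 2⁻¹ ^ m - 2⁻¹ ^ n := by
  induction n, hmn using Nat.le_induction with
  | base => simp
  | succ n hmn ih =>
    calc |a (n + 1) - a m| ≤ |a (n + 1) - a n| + |a n - a m| := abs_sub_le _ _ _
      _ ≤ 2⁻¹ ^ (n + 1) + (2⁻¹ ^ m - 2⁻¹ ^ n) := add_le_add (ha n hmn) ih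
      _ = 2⁻¹ ^ m - 2⁻¹ ^ (n + 1) := by ring

namespace LinearMap.BilinForm

variable {E : Type*} [AddCommGroup E] [Module ℝ E] {B : LinearMap.BilinForm ℝ E}

lemma IsSymm.apply_sub_sub (hB : B.IsSymm) (u v : E) :
    B (u - v) (u - v) = B u u - B v v - 2 * B (u - v) v := by
  simp only [map_sub, LinearMap.sub_apply, hB.eq v u]
  ring

lemma IsSymm.tendsto_apply_sub_sub_of_abs_apply_succ_sub_le (hB : B.IsSymm) {w : ℕ → E}
    (hcross : ∀ k m, m ≤ k → |B (w (k + 1) - w k) (w m)| ≤ (2⁻¹ : ℝ) ^ (k + 1))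
    {L : ℝ} (hL : Tendsto (fun k => B (w k) (w k)) atTop (𝓝 L)) :
    Tendsto (fun p : ℕ × ℕ => B (w p.1 - w p.2) (w p.1 - w p.2)) atTop (𝓝 0) := by
  set g : ℕ → ℝ := fun k => |B (w k) (w k) - L| + 2 * 2⁻¹ ^ k
  have hg : Tendsto g atTop (𝓝 0) := by
    simpa using (hL.sub_const L).abs.add
      ((tendsto_pow_atTop_nhds_zero_of_lt_one (by norm_num) (by norm_num)).const_mul 2)
  have hcross_le : ∀ m n, m ≤ n → |B (w n - w m) (w m)| ≤ (2⁻¹ : ℝ) ^ m := by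
    intro m n hmn
    have htel := abs_sub_le_geometric_of_abs_succ_sub_le (a := fun k => B (w k) (w m))
      (fun k hk => by simpa only [map_sub, LinearMap.sub_apply] using hcross k m hk) hmn
    simp only [map_sub, LinearMap.sub_apply]
    linarith [pow_nonneg (by norm_num : (0 : ℝ) ≤ 2⁻¹) n]
  have hle_of_le : ∀ m n, m ≤ n → |B (w n - w m) (w n - w m)| ≤ g n + g m := by
    intro m n hmn
    rw [hB.apply_sub_sub]
    calc |B (w n) (w n) - B (w m) (w m) - 2 * B (w n - w m) (w m)|
        = |(B (w n) (w n) - L) - (B (w m) (w m) - L) - 2 * B (w n - w m) (w m)| := by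
          ring_nf
      _ ≤ |B (w n) (w n) - L| + |B (w m) (w m) - L| + |2 * B (w n - w m) (w m)| :=
        (abs_sub _ _).trans (add_le_add_left (abs_sub _ _) _)
      _ ≤ g n + g m := by
        rw [abs_mul, abs_two]
        dsimp only [g]
        linarith [hcross_le m n hmn, pow_nonneg (by norm_num : (0 : ℝ) ≤ 2⁻¹) n]
  have hle : ∀ p : ℕ × ℕ, ‖B (w p.1 - w p.2) (w p.1 - w p.2)‖ ≤ g p.1 + g p.2 := by
    rintro ⟨n, m⟩
    rcases le_total m n with hmn | hnm
    · exact hle_of_le m n hmn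
    · have hswap : B (w n - w m) (w n - w m) = B (w m - w n) (w m - w n) := by
        rw [← neg_sub (w m) (w n), LinearMap.map_neg₂, map_neg, neg_neg]
      rw [Real.norm_eq_abs, hswap, add_comm]
      exact hle_of_le n m hnm
  have hfst : Tendsto (Prod.fst : ℕ × ℕ → ℕ) atTop atTop := by
    rw [← prod_atTop_atTop_eq]; exact tendsto_fst
  have hsnd : Tendsto (Prod.snd : ℕ × ℕ → ℕ) atTop atTop := by
    rw [← prod_atTop_atTop_eq]; exact tendsto_snd
  exact squeeze_zero_norm hle (by simpa using (hg.comp hfst).add (hg.comp hsnd))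

end LinearMap.BilinForm

section

variable {Ω ι : Type*} [MeasurableSpace Ω] {μ : Measure Ω} [Fintype ι] {a : Ω → ℝ}

lemma norm_sq_le_sum_sq (v : ι → ℝ) : ‖v‖ ^ 2 ≤ ∑ i, v i ^ 2 := by
  have hle : ‖v‖ ≤ √(∑ i, v i ^ 2) := by
    refine (pi_norm_le_iff_of_nonneg (Real.sqrt_nonneg _)).2 fun i => ?_
    rw [Real.norm_eq_abs]
    exact Real.abs_le_sqrt
      (Finset.single_le_sum (fun j _ => sq_nonneg (v j)) (Finset.mem_univ i))
  calc ‖v‖ ^ 2 ≤ √(∑ i, v i ^ 2) ^ 2 := pow_le_pow_left₀ (norm_nonneg v) hle 2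
    _ = ∑ i, v i ^ 2 := Real.sq_sqrt (Finset.sum_nonneg fun i _ => sq_nonneg (v i))

lemma sum_sq_le_card_mul_norm_sq (v : ι → ℝ) : ∑ i, v i ^ 2 ≤ Fintype.card ι * ‖v‖ ^ 2 := by
  have h : ∀ i ∈ Finset.univ, v i ^ 2 ≤ ‖v‖ ^ 2 := fun i _ => by
    simpa only [Real.norm_eq_abs, sq_abs] using
      pow_le_pow_left₀ (norm_nonneg _) (norm_le_pi_norm v i) 2
  simpa using Finset.sum_le_card_nsmul _ _ _ h

lemma integrable_sum_sq {u : Ω → ι → ℝ} (hu : MemLp u 2 μ) :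
    Integrable (fun x => ∑ i, u x i ^ 2) μ :=
  integrable_finsetSum _ fun i _ => (hu.eval i).integrable_sq

lemma integrable_mul_sum_mul (ha : MemLp a ∞ μ) {u v : Ω → ι → ℝ} (hu : MemLp u 2 μ)
    (hv : MemLp v 2 μ) : Integrable (fun x => a x * ∑ i, u x i * v x i) μ :=
  (integrable_finsetSum _ fun i _ =>
    (hu.eval i).integrable_mul (hv.eval i)).mul_of_top_right ha

variable (ι) in
noncomputable def weightedDotForm (ha : MemLp a ∞ μ) :
    LinearMap.BilinForm ℝ (Lp (ι → ℝ) 2 μ) :=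
  LinearMap.mk₂ ℝ (fun f g => ∫ x, a x * ∑ i, f x i * g x i ∂μ)
    (fun f f' g => by
      rw [← integral_add (integrable_mul_sum_mul ha (Lp.memLp f) (Lp.memLp g))
        (integrable_mul_sum_mul ha (Lp.memLp f') (Lp.memLp g))]
      refine integral_congr_ae ?_
      filter_upwards [Lp.coeFn_add f f'] with x hx
      simp only [hx, Pi.add_apply, add_mul, Finset.sum_add_distrib, mul_add])
    (fun r f g => by
      rw [smul_eq_mul, ← integral_const_mul]
      refine integral_congr_ae ?_
      filter_upwards [Lp.coeFn_smul r f] with x hx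
      simp only [hx, Pi.smul_apply, smul_eq_mul, mul_assoc, ← Finset.mul_sum]
      ring)
    (fun f g g' => by
      rw [← integral_add (integrable_mul_sum_mul ha (Lp.memLp f) (Lp.memLp g))
        (integrable_mul_sum_mul ha (Lp.memLp f) (Lp.memLp g'))]
      refine integral_congr_ae ?_
      filter_upwards [Lp.coeFn_add g g'] with x hx
      simp only [hx, Pi.add_apply, mul_add, Finset.sum_add_distrib])
    (fun r f g => by
      rw [smul_eq_mul, ← integral_const_mul]
      refine integral_congr_ae ?_
      filter_upwards [Lp.coeFn_smul r g] with x hx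
      simp only [hx, Pi.smul_apply, smul_eq_mul, mul_left_comm _ r, ← Finset.mul_sum])

lemma weightedDotForm_isSymm (ha : MemLp a ∞ μ) : (weightedDotForm ι ha).IsSymm :=
  ⟨fun f g => by simp only [weightedDotForm, LinearMap.mk₂_apply, mul_comm (f _ _)]⟩

lemma weightedDotForm_toLp (ha : MemLp a ∞ μ) {u v : Ω → ι → ℝ} (hu : MemLp u 2 μ)
    (hv : MemLp v 2 μ) :
    weightedDotForm ι ha (hu.toLp u) (hv.toLp v) = ∫ x, a x * ∑ i, u x i * v x i ∂μ := by
  refine integral_congr_ae ?_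
  filter_upwards [hu.coeFn_toLp, hv.coeFn_toLp] with x hux hvx
  simp only [hux, hvx]

lemma memLp_top_inv_of_le {ρ : Ω → ℝ} {c : ℝ} (hρ_meas : Measurable ρ) (hc : 0 < c)
    (hρ : ∀ᵐ x ∂μ, c ≤ ρ x) : MemLp (fun x => (ρ x)⁻¹) ∞ μ :=
  memLp_top_of_bound hρ_meas.inv.aestronglyMeasurable c⁻¹ <| hρ.mono fun x hx => by
    rw [Real.norm_eq_abs, abs_inv, abs_of_pos (hc.trans_le hx)]
    exact inv_anti₀ hc hx

lemma integral_le_mul_integral_inv_mul {ρ S : Ω → ℝ} {C : ℝ}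
    (hρ : ∀ᵐ x ∂μ, 0 < ρ x ∧ ρ x ≤ C) (hS : 0 ≤ S) (hS_int : Integrable S μ)
    (hρS_int : Integrable (fun x => (ρ x)⁻¹ * S x) μ) :
    ∫ x, S x ∂μ ≤ C * ∫ x, (ρ x)⁻¹ * S x ∂μ := by
  rw [← integral_const_mul]
  refine integral_mono_ae hS_int (hρS_int.const_mul C) ?_
  filter_upwards [hρ] with x ⟨hpos, hle⟩
  calc S x = ρ x * ((ρ x)⁻¹ * S x) := by field_simp
    _ ≤ C * ((ρ x)⁻¹ * S x) :=
      mul_le_mul_of_nonneg_right hle (mul_nonneg (inv_nonneg.2 hpos.le) (hS x))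

lemma integral_sum_sq_le_mul_weightedDotForm {ρ : Ω → ℝ} {C : ℝ}
    (hρ : ∀ᵐ x ∂μ, 0 < ρ x ∧ ρ x ≤ C) (hρ_inv : MemLp (fun x => (ρ x)⁻¹) ∞ μ)
    {u : Ω → ι → ℝ} (hu : MemLp u 2 μ) :
    ∫ x, ∑ i, u x i ^ 2 ∂μ ≤ C * weightedDotForm ι hρ_inv (hu.toLp u) (hu.toLp u) := by
  rw [weightedDotForm_toLp]
  simpa only [sq] using integral_le_mul_integral_inv_mul hρ (fun x => by positivity)
    (integrable_sum_sq hu) (by simpa only [sq] using integrable_mul_sum_mul hρ_inv hu hu)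

lemma norm_toLp_sq {E : Type*} [NormedAddCommGroup E] {u : Ω → E} (hu : MemLp u 2 μ) :
    ‖hu.toLp u‖ ^ 2 = ∫ x, ‖u x‖ ^ 2 ∂μ := by
  rw [Lp.norm_toLp, toReal_eLpNorm hu.1,
    lpNorm_eq_integral_norm_rpow_toReal two_ne_zero ENNReal.ofNat_ne_top hu.1]
  simp only [ENNReal.toReal_ofNat, Real.rpow_two]
  rw [← Real.rpow_natCast, ← Real.rpow_mul (integral_nonneg fun x => by positivity)]
  norm_num

theorem exists_tendsto_integral_sum_sq_sub {w : ℕ → Ω → ι → ℝ} (hw : ∀ k, MemLp (w k) 2 μ)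
    (hcau : Tendsto (fun p : ℕ × ℕ => ∫ x, ∑ i, (w p.1 x i - w p.2 x i) ^ 2 ∂μ) atTop (𝓝 0)) :
    ∃ wlim : Ω → ι → ℝ, MemLp wlim 2 μ ∧
      Tendsto (fun k => ∫ x, ∑ i, (w k x i - wlim x i) ^ 2 ∂μ) atTop (𝓝 0) := by
  set F : ℕ → Lp (ι → ℝ) 2 μ := fun k => (hw k).toLp (w k)
  have hdist : ∀ p : ℕ × ℕ,
      dist (F p.1) (F p.2) ≤ √(∫ x, ∑ i, (w p.1 x i - w p.2 x i) ^ 2 ∂μ) := by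
    intro p
    have hsub := (hw p.1).sub (hw p.2)
    rw [Real.le_sqrt dist_nonneg (integral_nonneg fun x => by positivity), dist_eq_norm,
      ← MemLp.toLp_sub, norm_toLp_sq]
    exact integral_mono (hsub.integrable_norm_pow two_ne_zero) (integrable_sum_sq hsub)
      fun x => norm_sq_le_sum_sq _
  have hF : CauchySeq F := cauchySeq_iff_tendsto_dist_atTop_0.2 <|
    squeeze_zero (fun _ => dist_nonneg) hdist (by simpa using hcau.sqrt)
  obtain ⟨G, hG⟩ := cauchySeq_tendsto_of_complete hF
  refine ⟨G, Lp.memLp G, squeeze_zero (fun k => integral_nonneg fun x => by positivity)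
    (fun k => ?_) (?_ : Tendsto (fun k => Fintype.card ι * ‖F k - G‖ ^ 2) atTop (𝓝 0))⟩
  · have hsub := (hw k).sub (Lp.memLp G)
    have hFG : F k - G = hsub.toLp _ := by
      rw [MemLp.toLp_sub (hw k) (Lp.memLp G), Lp.toLp_coeFn]
    rw [hFG, norm_toLp_sq, ← integral_const_mul]
    exact integral_mono (integrable_sum_sq hsub)
      ((hsub.integrable_norm_pow two_ne_zero).const_mul _) fun x => sum_sq_le_card_mul_norm_sq _
  · simpa using ((tendsto_iff_norm_sub_tendsto_zero.1 hG).pow 2).const_mul (Fintype.card ι : ℝ)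

end

theorem statement_15_general {Ω : Type*} [MeasurableSpace Ω] (μ : Measure Ω)
    {N : ℕ} (ρ : Ω → ℝ) (hρ_meas : Measurable ρ) (c C : ℝ) (hc : 0 < c)
    (hρ : ∀ᵐ x ∂μ, c ≤ ρ x ∧ ρ x ≤ C)
    (w : ℕ → Ω → Fin N → ℝ) (hw : ∀ k, MemLp (w k) 2 μ)
    (hcross : ∀ k : ℕ, 1 ≤ k → ∀ m : ℕ, m ≤ k - 1 →
      |∫ x, (ρ x)⁻¹ * ∑ i, (w k x i - w (k - 1) x i) * w m x i ∂μ| < (2 : ℝ)⁻¹ ^ k)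
    (hconv : ∃ L : ℝ, Tendsto (fun k => ∫ x, (ρ x)⁻¹ * ∑ i, (w k x i) ^ 2 ∂μ)
      atTop (𝓝 L)) :
    (∀ ε > 0, ∃ K : ℕ, ∀ m ≥ K, ∀ n ≥ K,
      ∫ x, ∑ i, (w n x i - w m x i) ^ 2 ∂μ < ε) ∧
    ∃ wlim : Ω → Fin N → ℝ, MemLp wlim 2 μ ∧
      Tendsto (fun k => ∫ x, ∑ i, (w k x i - wlim x i) ^ 2 ∂μ) atTop (𝓝 0) := by
  have hρ_pos : ∀ᵐ x ∂μ, 0 < ρ x ∧ ρ x ≤ C := hρ.mono fun x hx => ⟨hc.trans_le hx.1, hx.2⟩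
  have hρ_inv := memLp_top_inv_of_le hρ_meas hc (hρ.mono fun x hx => hx.1)
  set F : ℕ → Lp (Fin N → ℝ) 2 μ := fun k => (hw k).toLp (w k)
  have hF_sub : ∀ n m, F n - F m = ((hw n).sub (hw m)).toLp _ :=
    fun n m => (MemLp.toLp_sub _ _).symm
  obtain ⟨L, hL⟩ := hconv
  have hB : Tendsto (fun p : ℕ × ℕ =>
      weightedDotForm (Fin N) hρ_inv (F p.1 - F p.2) (F p.1 - F p.2)) atTop (𝓝 0) := by
    refine (weightedDotForm_isSymm hρ_inv).tendsto_apply_sub_sub_of_abs_apply_succ_sub_le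
      (fun k m hmk => ?_) (L := L) ?_
    · rw [hF_sub, weightedDotForm_toLp]
      simpa using (hcross (k + 1) (by omega) m (by omega)).le
    · simpa only [F, weightedDotForm_toLp, sq] using hL
  have hcau : Tendsto (fun p : ℕ × ℕ => ∫ x, ∑ i, (w p.1 x i - w p.2 x i) ^ 2 ∂μ)
      atTop (𝓝 0) := by
    refine squeeze_zero (fun _ => integral_nonneg fun _ => by positivity) (fun p => ?_)
      (by simpa only [mul_zero] using hB.const_mul C)
    rw [hF_sub]
    exact integral_sum_sq_le_mul_weightedDotForm hρ_pos hρ_inv ((hw p.1).sub (hw p.2))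
  refine ⟨fun ε hε => ?_, exists_tendsto_integral_sum_sq_sub hw hcau⟩
  obtain ⟨K, hK⟩ := eventually_atTop_prod_self'.1 (hcau.eventually (gt_mem_nhds hε))
  exact ⟨K, fun m hm n hn => hK n hn m hm⟩

/-- If `{w_k} ⊂ L²(Ω;ℝ^N)` on a finite measure space, `ρ` is bounded above and below
by positive constants, the cross terms `∫ (1/ρ)(w_k − w_{k−1})·w_m dμ` are smaller than
`2^{−k}` for `m < k`, and the weighted norms `∫ (1/ρ)|w_k|² dμ` converge, then `{w_k}`
is Cauchy in `L²(Ω;ℝ^N)` and converges strongly in `L²(Ω;ℝ^N)`. -/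
theorem statement_15 {Ω : Type*} [MeasurableSpace Ω] (μ : Measure Ω) [IsFiniteMeasure μ]
    {N : ℕ} (ρ : Ω → ℝ) (hρ_meas : Measurable ρ) (c C : ℝ) (hc : 0 < c)
    (hρ : ∀ᵐ x ∂μ, c ≤ ρ x ∧ ρ x ≤ C)
    (w : ℕ → Ω → Fin N → ℝ) (hw : ∀ k, MemLp (w k) 2 μ)
    (hcross : ∀ k : ℕ, 1 ≤ k → ∀ m : ℕ, m ≤ k - 1 →
      |∫ x, (ρ x)⁻¹ * ∑ i, (w k x i - w (k - 1) x i) * w m x i ∂μ| < (2 : ℝ)⁻¹ ^ k)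
    (hconv : ∃ L : ℝ, Tendsto (fun k => ∫ x, (ρ x)⁻¹ * ∑ i, (w k x i) ^ 2 ∂μ)
      atTop (𝓝 L)) :
    (∀ ε > 0, ∃ K : ℕ, ∀ m ≥ K, ∀ n ≥ K,
      ∫ x, ∑ i, (w n x i - w m x i) ^ 2 ∂μ < ε) ∧
    ∃ wlim : Ω → Fin N → ℝ, MemLp wlim 2 μ ∧
      Tendsto (fun k => ∫ x, ∑ i, (w k x i - wlim x i) ^ 2 ∂μ) atTop (𝓝 0) :=
  statement_15_general μ ρ hρ_meas c C hc hρ w hw hcross hconv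
end
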